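/- arXiv:1603.03124 — 3 statements merged into one kernel-verified Lean document; each statement's English description precedes it below -/
import Mathlib

section
/- Under Condition (C), define the scale mapping 𝒫 : I → ℝ² by 𝒫(0) := 0 and 𝒫(x) := p_θ(r) · x/‖x‖ for x ≠ 0 with polar coordinates (r,θ). Then 𝒫 is a bijection from I onto J := {(r,θ) in polar coordinates : 0 ≤ r < p_θ(ℓ(θ)−)}, and both 𝒫 and its inverse mapping 𝒬 : J → I are continuous with respect to the tree-metric ρ; in other words, 𝒫 is a homeomorphism from I onto J when both sets carry the tree-topology. -/
open MeasureTheory Set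
open scoped Classical ENNReal

/-- `p′_θ(y) = exp(−2∫₀^y b(z,θ)/s(z,θ)² dz)`, the derivative of the radial scale function. -/
noncomputable def pprime (b s : ℝ → ℝ → ℝ) (θ y : ℝ) : ℝ :=
  Real.exp (-2 * ∫ z in (0:ℝ)..y, b z θ / (s z θ) ^ 2)

/-- The radial scale function `p_θ(r) = ∫₀^r p′_θ(y) dy`. -/
noncomputable def pscale (b s : ℝ → ℝ → ℝ) (θ r : ℝ) : ℝ :=
  ∫ y in (0:ℝ)..r, pprime b s θ y

/-- Condition (C): `ℓ` is measurable and bounded away from zero, `b` and `s` are Borel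
measurable on `Ǐ`, `s` vanishes nowhere on `Ǐ`, `b/s²` and `1/s²` are locally integrable
on `(0,ℓ(θ))` along each ray, and `(1+|b|)/s²` is bounded near the origin. -/
structure CondC (ℓ : ℝ → ℝ≥0∞) (b s : ℝ → ℝ → ℝ) : Prop where
  meas_ell : Measurable ℓ
  ell_pos : 0 < ⨅ θ ∈ Ico (0:ℝ) (2 * Real.pi), ℓ θ
  meas_b : Measurable
    (Set.restrict {q : ℝ × ℝ | 0 < q.1 ∧ ENNReal.ofReal q.1 < ℓ q.2 ∧
      q.2 ∈ Ico (0:ℝ) (2 * Real.pi)} (fun q => b q.1 q.2))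
  meas_s : Measurable
    (Set.restrict {q : ℝ × ℝ | 0 < q.1 ∧ ENNReal.ofReal q.1 < ℓ q.2 ∧
      q.2 ∈ Ico (0:ℝ) (2 * Real.pi)} (fun q => s q.1 q.2))
  s_ne : ∀ θ ∈ Ico (0:ℝ) (2 * Real.pi), ∀ r : ℝ, 0 < r → ENNReal.ofReal r < ℓ θ →
    s r θ ≠ 0
  loc_int_b : ∀ θ ∈ Ico (0:ℝ) (2 * Real.pi), ∀ r₁ r₂ : ℝ, 0 < r₁ → r₁ ≤ r₂ →
    ENNReal.ofReal r₂ < ℓ θ → IntegrableOn (fun z => b z θ / (s z θ) ^ 2) (Icc r₁ r₂)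
  loc_int_s : ∀ θ ∈ Ico (0:ℝ) (2 * Real.pi), ∀ r₁ r₂ : ℝ, 0 < r₁ → r₁ ≤ r₂ →
    ENNReal.ofReal r₂ < ℓ θ → IntegrableOn (fun z => 1 / (s z θ) ^ 2) (Icc r₁ r₂)
  bound_near_origin : ∃ η : ℝ, 0 < η ∧
    ENNReal.ofReal η < (⨅ θ ∈ Ico (0:ℝ) (2 * Real.pi), ℓ θ) ∧
    ∃ C : ℝ, ∀ θ ∈ Ico (0:ℝ) (2 * Real.pi), ∀ r ∈ Ioc (0:ℝ) η,
      (1 + |b r θ|) / (s r θ) ^ 2 ≤ C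

/-- Two points of the plane lie on the same ray emanating from the origin. -/
def OnSameRay (x y : EuclideanSpace ℝ (Fin 2)) : Prop :=
  x = 0 ∨ y = 0 ∨ ∃ t : ℝ, 0 < t ∧ y = t • x

/-- The tree-metric on the plane. -/
noncomputable def treeDist (x y : EuclideanSpace ℝ (Fin 2)) : ℝ :=
  if OnSameRay x y then |‖x‖ - ‖y‖| else ‖x‖ + ‖y‖

/-- The argument of a planar point, normalized to lie in `[0, 2π)`. -/
noncomputable def argOf (x : EuclideanSpace ℝ (Fin 2)) : ℝ :=
  if Complex.arg (⟨x 0, x 1⟩ : ℂ) < 0 then Complex.arg (⟨x 0, x 1⟩ : ℂ) + 2 * Real.pi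
  else Complex.arg (⟨x 0, x 1⟩ : ℂ)

/-- `p_θ(ℓ(θ)−) := sup_{0 ≤ r < ℓ(θ)} p_θ(r)`, as an extended nonnegative real. -/
noncomputable def pEnd (ℓ : ℝ → ℝ≥0∞) (b s : ℝ → ℝ → ℝ) (θ : ℝ) : ℝ≥0∞ :=
  ⨆ r ∈ {r : ℝ | 0 ≤ r ∧ ENNReal.ofReal r < ℓ θ}, ENNReal.ofReal (pscale b s θ r)

/-- The set `I = {(r,θ) : 0 ≤ r < ℓ(θ)}` in polar coordinates. -/
noncomputable def Iset (ℓ : ℝ → ℝ≥0∞) : Set (EuclideanSpace ℝ (Fin 2)) :=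
  {x | ENNReal.ofReal ‖x‖ < ℓ (argOf x)}

/-- The set `J = {(r,θ) : 0 ≤ r < p_θ(ℓ(θ)−)}` in polar coordinates. -/
noncomputable def Jset (ℓ : ℝ → ℝ≥0∞) (b s : ℝ → ℝ → ℝ) :
    Set (EuclideanSpace ℝ (Fin 2)) :=
  {x | ENNReal.ofReal ‖x‖ < pEnd ℓ b s (argOf x)}

/-- The scale mapping `𝒫(x) = p_θ(r)·x/‖x‖` for `x ≠ 0` with polar coordinates `(r,θ)`,
and `𝒫(0) = 0`. -/
noncomputable def Pmap (b s : ℝ → ℝ → ℝ) (x : EuclideanSpace ℝ (Fin 2)) :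
    EuclideanSpace ℝ (Fin 2) :=
  pscale b s (argOf x) ‖x‖ • (‖x‖⁻¹ • x)

/-!
Along each ray the scale function `p_θ` is a continuous strictly increasing bijection of
`[0, ℓ(θ))` onto `[0, p_θ(ℓ(θ)−))`, so `𝒫` and its inverse are both radial maps, acting on the
ray of angle `θ` by `p_θ` and by `p_θ⁻¹`. A tree-metric ball around `x ≠ 0` of radius below `‖x‖`
stays on the ray of `x`, so away from the origin tree-continuity is continuity of `p_θ` or `p_θ⁻¹`
in one real variable. At the origin it needs bounds uniform in `θ`; these come from the bound
`(1 + |b|)/s² ≤ C` near `0`, which gives `e^{-2Cη} r ≤ p_θ(r) ≤ e^{2Cη} r` for `r ≤ η`.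
-/

open Real Filter Topology

local notation "ℝ²" => EuclideanSpace ℝ (Fin 2)

lemma argOf_mem (x : ℝ²) : argOf x ∈ Ico 0 (2 * π) := by
  have h₁ := Complex.neg_pi_lt_arg (⟨x 0, x 1⟩ : ℂ)
  have h₂ := Complex.arg_le_pi (⟨x 0, x 1⟩ : ℂ)
  unfold argOf
  split_ifs <;> constructor <;> linarith [pi_pos]

lemma argOf_smul_of_pos (x : ℝ²) {t : ℝ} (ht : 0 < t) : argOf (t • x) = argOf x := by
  have hcoords : (⟨(t • x) 0, (t • x) 1⟩ : ℂ) = (t : ℂ) * ⟨x 0, x 1⟩ := by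
    apply Complex.ext <;> simp
  unfold argOf
  rw [hcoords, Complex.arg_real_mul _ ht]

lemma inv_norm_smul_of_pos (x : ℝ²) {t : ℝ} (ht : 0 < t) :
    ‖t • x‖⁻¹ • (t • x) = ‖x‖⁻¹ • x := by
  rcases eq_or_ne x 0 with rfl | hx
  · simp
  rw [norm_smul, Real.norm_of_nonneg ht.le, smul_smul]
  congr 1
  field_simp

lemma norm_inv_norm_smul {x : ℝ²} (hx : x ≠ 0) : ‖‖x‖⁻¹ • x‖ = 1 :=
  norm_smul_inv_norm (𝕜 := ℝ) hx

lemma treeDist_zero_left (y : ℝ²) : treeDist 0 y = ‖y‖ := by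
  simp [treeDist, OnSameRay]

lemma treeDist_self_smul_of_pos (x : ℝ²) {t : ℝ} (ht : 0 < t) :
    treeDist x (t • x) = |‖x‖ - ‖t • x‖| :=
  if_pos (Or.inr (Or.inr ⟨t, ht, rfl⟩))

lemma treeDist_smul_smul {u : ℝ²} (hu : ‖u‖ = 1) {a a' : ℝ} (ha : 0 ≤ a) (ha' : 0 ≤ a') :
    treeDist (a • u) (a' • u) = |a - a'| := by
  have hray : OnSameRay (a • u) (a' • u) := by
    rcases ha.eq_or_lt with rfl | ha
    · exact Or.inl (zero_smul ℝ u)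
    rcases ha'.eq_or_lt with rfl | ha'
    · exact Or.inr (Or.inl (zero_smul ℝ u))
    exact Or.inr (Or.inr ⟨a' / a, div_pos ha' ha, by rw [smul_smul, div_mul_cancel₀ _ ha.ne']⟩)
  rw [treeDist, if_pos hray, norm_smul, norm_smul, hu, mul_one, mul_one,
    Real.norm_of_nonneg ha, Real.norm_of_nonneg ha']

lemma exists_pos_smul_eq_of_treeDist_lt_norm {x y : ℝ²} (hx : x ≠ 0)
    (hxy : treeDist x y < ‖x‖) : ∃ t : ℝ, 0 < t ∧ y = t • x := by
  unfold treeDist at hxy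
  split_ifs at hxy with hray
  · rcases hray with rfl | rfl | ht
    · exact absurd rfl hx
    · simp at hxy
    · exact ht
  · linarith [norm_nonneg y]

def TreeContinuousWithinAt (F : ℝ² → ℝ²) (S : Set ℝ²) (x : ℝ²) : Prop :=
  ∀ ε > (0:ℝ), ∃ δ > (0:ℝ), ∀ y ∈ S, treeDist x y < δ → treeDist (F x) (F y) < ε

def TreeContinuousOn (F : ℝ² → ℝ²) (S : Set ℝ²) : Prop :=
  ∀ x ∈ S, TreeContinuousWithinAt F S x

section RadialInterval

def radialInterval (L : ℝ≥0∞) : Set ℝ := {r | 0 ≤ r ∧ ENNReal.ofReal r < L}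

variable {L : ℝ≥0∞} {r : ℝ}

lemma zero_mem_radialInterval (hr : r ∈ radialInterval L) : 0 ∈ radialInterval L :=
  ⟨le_rfl, (ENNReal.ofReal_le_ofReal hr.1).trans_lt hr.2⟩

lemma Icc_subset_radialInterval (hr : r ∈ radialInterval L) : Icc 0 r ⊆ radialInterval L :=
  fun _ hz => ⟨hz.1, (ENNReal.ofReal_le_ofReal hz.2).trans_lt hr.2⟩

lemma exists_gt_mem_radialInterval (hr : r ∈ radialInterval L) :
    ∃ r' ∈ radialInterval L, r < r' := by
  obtain ⟨q, hq0, hrq, hqL⟩ := ENNReal.lt_iff_exists_real_btwn.mp hr.2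
  exact ⟨q, ⟨hq0, hqL⟩, (ENNReal.ofReal_lt_ofReal_iff'.mp hrq).1⟩

lemma radialInterval_mem_nhds (hr : r ∈ radialInterval L) (hr0 : 0 < r) :
    radialInterval L ∈ 𝓝 r :=
  Filter.inter_mem (Ici_mem_nhds hr0)
    ((isOpen_lt ENNReal.continuous_ofReal continuous_const).mem_nhds hr.2)

end RadialInterval

lemma mem_Iset_iff {L : ℝ → ℝ≥0∞} {x : ℝ²} : x ∈ Iset L ↔ ‖x‖ ∈ radialInterval (L (argOf x)) :=
  ⟨fun hx => ⟨norm_nonneg x, hx⟩, And.right⟩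

structure IsRadialScale (φ : ℝ → ℝ) (L M : ℝ≥0∞) : Prop where
  strictMonoOn : StrictMonoOn φ (radialInterval L)
  bijOn : BijOn φ (radialInterval L) (radialInterval M)

namespace IsRadialScale

variable {φ : ℝ → ℝ} {L M : ℝ≥0∞} {r : ℝ}

lemma nonneg (hφ : IsRadialScale φ L M) (hr : r ∈ radialInterval L) : 0 ≤ φ r :=
  (hφ.bijOn.mapsTo hr).1

lemma pos (hφ : IsRadialScale φ L M) (hr : r ∈ radialInterval L) (hr0 : 0 < r) : 0 < φ r :=
  (hφ.nonneg (zero_mem_radialInterval hr)).trans_lt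
    (hφ.strictMonoOn (zero_mem_radialInterval hr) hr hr0)

lemma continuousAt (hφ : IsRadialScale φ L M) (hr : r ∈ radialInterval L) (hr0 : 0 < r) :
    ContinuousAt φ r := by
  refine continuousAt_of_monotoneOn_of_image_mem_nhds hφ.strictMonoOn.monotoneOn
    (radialInterval_mem_nhds hr hr0) ?_
  rw [hφ.bijOn.image_eq]
  exact radialInterval_mem_nhds (hφ.bijOn.mapsTo hr) (hφ.pos hr hr0)

lemma invOn (hφ : IsRadialScale φ L M) :
    InvOn (Function.invFunOn φ (radialInterval L)) φ (radialInterval L) (radialInterval M) :=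
  hφ.bijOn.invOn_invFunOn

lemma bijOn_invFunOn (hφ : IsRadialScale φ L M) :
    BijOn (Function.invFunOn φ (radialInterval L)) (radialInterval M) (radialInterval L) :=
  hφ.bijOn.symm hφ.invOn.symm

lemma invFunOn (hφ : IsRadialScale φ L M) :
    IsRadialScale (Function.invFunOn φ (radialInterval L)) M L := by
  have hbij := hφ.bijOn_invFunOn
  refine ⟨fun u hu v hv huv => ?_, hbij⟩
  rw [← not_le, ← hφ.strictMonoOn.le_iff_le (hbij.mapsTo hv) (hbij.mapsTo hu),
    hφ.invOn.2 hu, hφ.invOn.2 hv, not_le]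
  exact huv

lemma invFunOn_le_inv_mul (hφ : IsRadialScale φ L M) {η c u : ℝ} (hc : 0 < c)
    (hη : η ∈ radialInterval L) (hlower : ∀ r ∈ Icc 0 η, c * r ≤ φ r)
    (hu : u ∈ radialInterval M) (huη : u < c * η) :
    Function.invFunOn φ (radialInterval L) u ≤ c⁻¹ * u := by
  set ψ := Function.invFunOn φ (radialInterval L)
  have hψu : ψ u ∈ radialInterval L := hφ.bijOn_invFunOn.mapsTo hu
  have hφψ : φ (ψ u) = u := hφ.invOn.2 hu
  rw [le_inv_mul_iff₀ hc]
  by_cases hle : ψ u ≤ η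
  · simpa [hφψ] using hlower (ψ u) ⟨hψu.1, hle⟩
  · have hφηu := hφ.strictMonoOn hη hψu (not_le.mp hle)
    linarith [hlower η ⟨hη.1, le_rfl⟩]

end IsRadialScale

section RadialScaleOfContinuous

variable {φ : ℝ → ℝ} {L : ℝ≥0∞}

lemma image_radialInterval (hmono : StrictMonoOn φ (radialInterval L))
    (hcont : ContinuousOn φ (radialInterval L)) (hφ0 : φ 0 = 0) :
    φ '' radialInterval L = radialInterval (⨆ r ∈ radialInterval L, ENNReal.ofReal (φ r)) := by
  ext u
  constructor
  · rintro ⟨r, hr, rfl⟩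
    obtain ⟨r', hr', hrr'⟩ := exists_gt_mem_radialInterval hr
    have hφr : 0 ≤ φ r := hφ0 ▸ hmono.monotoneOn (zero_mem_radialInterval hr) hr hr.1
    have hφrr' := hmono hr hr' hrr'
    exact ⟨hφr, (ENNReal.ofReal_lt_ofReal_iff'.mpr ⟨hφrr', hφr.trans_lt hφrr'⟩).trans_le
      (le_biSup (fun r => ENNReal.ofReal (φ r)) hr')⟩
  · rintro ⟨hu0, hu⟩
    obtain ⟨r, hr, hur⟩ := lt_biSup_iff.mp hu
    have hu' : u ∈ Icc (φ 0) (φ r) := ⟨hφ0.symm ▸ hu0, (ENNReal.ofReal_lt_ofReal_iff'.mp hur).1.le⟩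
    exact image_mono (Icc_subset_radialInterval hr)
      (intermediate_value_Icc hr.1 (hcont.mono (Icc_subset_radialInterval hr)) hu')

lemma isRadialScale_of_continuousOn (hmono : StrictMonoOn φ (radialInterval L))
    (hcont : ContinuousOn φ (radialInterval L)) (hφ0 : φ 0 = 0) :
    IsRadialScale φ L (⨆ r ∈ radialInterval L, ENNReal.ofReal (φ r)) :=
  ⟨hmono, image_radialInterval hmono hcont hφ0 ▸ hmono.injOn.bijOn_image⟩

end RadialScaleOfContinuous

section Primitive

variable {g : ℝ → ℝ} {L : ℝ≥0∞}

lemma continuousOn_primitive_radialInterval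
    (hg : ∀ r ∈ radialInterval L, IntegrableOn g (Ioc 0 r)) :
    ContinuousOn (fun y => ∫ z in (0:ℝ)..y, g z) (radialInterval L) := by
  refine continuousOn_of_locally_continuousOn fun r hr => ?_
  obtain ⟨r', hr', hrr'⟩ := exists_gt_mem_radialInterval hr
  have hcont := intervalIntegral.continuousOn_primitive_interval (f := g) (a := 0) (b := r')
    (μ := volume) (by rw [uIcc_of_le hr'.1, integrableOn_Icc_iff_integrableOn_Ioc]; exact hg r' hr')
  rw [uIcc_of_le hr'.1] at hcont
  exact ⟨Iio r', isOpen_Iio, hrr', hcont.mono fun z hz => ⟨hz.1.1, hz.2.le⟩⟩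

lemma strictMonoOn_primitive_radialInterval (hg : ContinuousOn g (radialInterval L))
    (hpos : ∀ z, 0 < g z) :
    StrictMonoOn (fun y => ∫ z in (0:ℝ)..y, g z) (radialInterval L) := by
  have hint : ∀ r ∈ radialInterval L, IntervalIntegrable g volume 0 r := fun r hr =>
    (hg.mono (by rw [uIcc_of_le hr.1]; exact Icc_subset_radialInterval hr)).intervalIntegrable
  intro r₁ hr₁ r₂ hr₂ h12
  have hsub := intervalIntegral.integral_interval_sub_left (hint r₂ hr₂) (hint r₁ hr₁)
  have hint12 := intervalIntegral.intervalIntegral_pos_of_pos_on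
    ((hint r₁ hr₁).symm.trans (hint r₂ hr₂)) (fun z _ => hpos z) h12
  simp only
  linarith

end Primitive

section RadialMap

noncomputable def radialMap (F : ℝ → ℝ → ℝ) (x : ℝ²) : ℝ² := F (argOf x) ‖x‖ • (‖x‖⁻¹ • x)

variable {F G : ℝ → ℝ → ℝ} {x : ℝ²}

@[simp] lemma radialMap_zero (F : ℝ → ℝ → ℝ) : radialMap F 0 = 0 := by
  simp [radialMap]

lemma radialMap_smul_of_pos (F : ℝ → ℝ → ℝ) (x : ℝ²) {t : ℝ} (ht : 0 < t) :
    radialMap F (t • x) = F (argOf x) ‖t • x‖ • (‖x‖⁻¹ • x) := by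
  rw [radialMap, argOf_smul_of_pos x ht, inv_norm_smul_of_pos x ht]

lemma radialMap_eq_smul (F : ℝ → ℝ → ℝ) (x : ℝ²) :
    radialMap F x = (F (argOf x) ‖x‖ * ‖x‖⁻¹) • x :=
  smul_smul (F (argOf x) ‖x‖) ‖x‖⁻¹ x

lemma norm_radialMap (hx : x ≠ 0) (hF : 0 ≤ F (argOf x) ‖x‖) :
    ‖radialMap F x‖ = F (argOf x) ‖x‖ := by
  rw [radialMap, norm_smul, norm_inv_norm_smul hx, mul_one, Real.norm_of_nonneg hF]

lemma argOf_radialMap (hx : x ≠ 0) (hF : 0 < F (argOf x) ‖x‖) :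
    argOf (radialMap F x) = argOf x := by
  rw [radialMap_eq_smul, argOf_smul_of_pos x (mul_pos hF (inv_pos.mpr (norm_pos_iff.mpr hx)))]

lemma radialMap_radialMap (hx : x ≠ 0) (hF : 0 < F (argOf x) ‖x‖) :
    radialMap G (radialMap F x) = G (argOf x) (F (argOf x) ‖x‖) • (‖x‖⁻¹ • x) := by
  have ht : 0 < F (argOf x) ‖x‖ * ‖x‖⁻¹ := mul_pos hF (inv_pos.mpr (norm_pos_iff.mpr hx))
  rw [← norm_radialMap hx hF.le, radialMap_eq_smul F x, radialMap_smul_of_pos G x ht]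

variable {L M : ℝ → ℝ≥0∞}

lemma mapsTo_radialMap (hF : ∀ θ ∈ Ico 0 (2 * π), IsRadialScale (F θ) (L θ) (M θ)) :
    MapsTo (radialMap F) (Iset L) (Iset M) := by
  intro x hx
  rw [mem_Iset_iff] at hx ⊢
  have hFx := hF _ (argOf_mem x)
  rcases eq_or_ne x 0 with rfl | hx0
  · rw [radialMap_zero, norm_zero]
    exact zero_mem_radialInterval (hFx.bijOn.mapsTo hx)
  · have hpos := hFx.pos hx (norm_pos_iff.mpr hx0)
    rw [argOf_radialMap hx0 hpos, norm_radialMap hx0 hpos.le]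
    exact hFx.bijOn.mapsTo hx

lemma leftInvOn_radialMap (hF : ∀ θ ∈ Ico 0 (2 * π), IsRadialScale (F θ) (L θ) (M θ))
    (hGF : ∀ θ ∈ Ico 0 (2 * π), LeftInvOn (G θ) (F θ) (radialInterval (L θ))) :
    LeftInvOn (radialMap G) (radialMap F) (Iset L) := by
  intro x hx
  rw [mem_Iset_iff] at hx
  rcases eq_or_ne x 0 with rfl | hx0
  · simp
  · rw [radialMap_radialMap hx0 ((hF _ (argOf_mem x)).pos hx (norm_pos_iff.mpr hx0)),
      hGF _ (argOf_mem x) hx, smul_inv_smul₀ (norm_ne_zero_iff.mpr hx0)]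

lemma treeContinuousWithinAt_radialMap_zero
    (hF : ∀ θ ∈ Ico 0 (2 * π), IsRadialScale (F θ) (L θ) (M θ)) {δ K : ℝ} (hδ : 0 < δ)
    (hupper : ∀ θ ∈ Ico 0 (2 * π), ∀ r ∈ radialInterval (L θ), r < δ → F θ r ≤ K * r) :
    TreeContinuousWithinAt (radialMap F) (Iset L) 0 := by
  intro ε hε
  have hK : 0 < |K| + 1 := by positivity
  refine ⟨min δ (ε / (|K| + 1)), lt_min hδ (div_pos hε hK), fun y hy hdist => ?_⟩
  rw [treeDist_zero_left] at hdist
  rw [radialMap_zero, treeDist_zero_left]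
  rcases eq_or_ne y 0 with rfl | hy0
  · simpa using hε
  rw [mem_Iset_iff] at hy
  have hyδ : ‖y‖ < ε / (|K| + 1) := hdist.trans_le (min_le_right _ _)
  rw [lt_div_iff₀ hK] at hyδ
  rw [norm_radialMap hy0 ((hF _ (argOf_mem y)).nonneg hy)]
  calc F (argOf y) ‖y‖ ≤ K * ‖y‖ :=
        hupper _ (argOf_mem y) _ hy (hdist.trans_le (min_le_left _ _))
    _ ≤ |K| * ‖y‖ := mul_le_mul_of_nonneg_right (le_abs_self K) (norm_nonneg y)
    _ < ε := by nlinarith [norm_nonneg y]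

lemma treeContinuousWithinAt_radialMap_of_ne_zero
    (hF : ∀ θ ∈ Ico 0 (2 * π), IsRadialScale (F θ) (L θ) (M θ)) (hx : x ∈ Iset L)
    (hx0 : x ≠ 0) : TreeContinuousWithinAt (radialMap F) (Iset L) x := by
  intro ε hε
  rw [mem_Iset_iff] at hx
  have hFx := hF _ (argOf_mem x)
  obtain ⟨δ, hδ, hcont⟩ :=
    Metric.continuousAt_iff.mp (hFx.continuousAt hx (norm_pos_iff.mpr hx0)) ε hε
  refine ⟨min δ ‖x‖, lt_min hδ (norm_pos_iff.mpr hx0), fun y hy hdist => ?_⟩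
  obtain ⟨t, ht, rfl⟩ := exists_pos_smul_eq_of_treeDist_lt_norm hx0
    (hdist.trans_le (min_le_right _ _))
  rw [mem_Iset_iff, argOf_smul_of_pos x ht] at hy
  have hxF : radialMap F x = F (argOf x) ‖x‖ • (‖x‖⁻¹ • x) := rfl
  rw [hxF, radialMap_smul_of_pos F x ht, treeDist_smul_smul (norm_inv_norm_smul hx0)
    (hFx.nonneg hx) (hFx.nonneg hy), ← Real.dist_eq, dist_comm]
  rw [treeDist_self_smul_of_pos x ht, ← Real.dist_eq, dist_comm] at hdist
  exact hcont (hdist.trans_le (min_le_left _ _))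

lemma treeContinuousOn_radialMap
    (hF : ∀ θ ∈ Ico 0 (2 * π), IsRadialScale (F θ) (L θ) (M θ)) {δ K : ℝ} (hδ : 0 < δ)
    (hupper : ∀ θ ∈ Ico 0 (2 * π), ∀ r ∈ radialInterval (L θ), r < δ → F θ r ≤ K * r) :
    TreeContinuousOn (radialMap F) (Iset L) := by
  intro x hx
  rcases eq_or_ne x 0 with rfl | hx0
  · exact treeContinuousWithinAt_radialMap_zero hF hδ hupper
  · exact treeContinuousWithinAt_radialMap_of_ne_zero hF hx hx0

end RadialMap

theorem radialMap_treeHomeomorph {F : ℝ → ℝ → ℝ} {L M : ℝ → ℝ≥0∞}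
    (hF : ∀ θ ∈ Ico 0 (2 * π), IsRadialScale (F θ) (L θ) (M θ)) {η c K : ℝ} (hc : 0 < c)
    (hη : ∀ θ ∈ Ico 0 (2 * π), η ∈ radialInterval (L θ)) (hη0 : 0 < η)
    (hbounds : ∀ θ ∈ Ico 0 (2 * π), ∀ r ∈ Icc 0 η, c * r ≤ F θ r ∧ F θ r ≤ K * r) :
    BijOn (radialMap F) (Iset L) (Iset M) ∧ TreeContinuousOn (radialMap F) (Iset L) ∧
    ∃ Q : ℝ² → ℝ²,
      (∀ x ∈ Iset L, Q (radialMap F x) = x) ∧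
      (∀ y ∈ Iset M, Q y ∈ Iset L ∧ radialMap F (Q y) = y) ∧
      TreeContinuousOn Q (Iset M) := by
  set G := fun θ => Function.invFunOn (F θ) (radialInterval (L θ))
  have hG : ∀ θ ∈ Ico 0 (2 * π), IsRadialScale (G θ) (M θ) (L θ) :=
    fun θ hθ => (hF θ hθ).invFunOn
  have hinv : InvOn (radialMap G) (radialMap F) (Iset L) (Iset M) :=
    ⟨leftInvOn_radialMap hF fun θ hθ => (hF θ hθ).invOn.1,
      leftInvOn_radialMap hG fun θ hθ => (hF θ hθ).invOn.2⟩
  have hupperF : ∀ θ ∈ Ico 0 (2 * π), ∀ r ∈ radialInterval (L θ), r < η → F θ r ≤ K * r :=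
    fun θ hθ r hr hrη => (hbounds θ hθ r ⟨hr.1, hrη.le⟩).2
  have hupperG : ∀ θ ∈ Ico 0 (2 * π), ∀ u ∈ radialInterval (M θ), u < c * η → G θ u ≤ c⁻¹ * u :=
    fun θ hθ u hu huη => (hF θ hθ).invFunOn_le_inv_mul hc (hη θ hθ)
      (fun r hr => (hbounds θ hθ r hr).1) hu huη
  exact ⟨hinv.bijOn (mapsTo_radialMap hF) (mapsTo_radialMap hG),
    treeContinuousOn_radialMap hF hη0 hupperF, radialMap G, hinv.1,
    fun y hy => ⟨mapsTo_radialMap hG hy, hinv.2 hy⟩,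
    treeContinuousOn_radialMap hG (mul_pos hc hη0) hupperG⟩

section ScaleFunction

variable {ℓ : ℝ → ℝ≥0∞} {b s : ℝ → ℝ → ℝ} {θ : ℝ}

lemma norm_div_sq_le_of_one_add_abs_div_sq_le {x y C : ℝ} (h : (1 + |x|) / y ^ 2 ≤ C) :
    ‖x / y ^ 2‖ ≤ C := by
  rw [Real.norm_eq_abs, abs_div, abs_pow, sq_abs]
  exact (div_le_div_of_nonneg_right (by linarith [abs_nonneg x]) (sq_nonneg y)).trans h

lemma aestronglyMeasurable_drift (h : CondC ℓ b s) (hθ : θ ∈ Ico 0 (2 * π)) {r : ℝ}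
    (hr0 : 0 < r) (hr : ENNReal.ofReal r < ℓ θ) :
    AEStronglyMeasurable (fun z => b z θ / s z θ ^ 2) (volume.restrict (Ioc 0 r)) := by
  have hcover : Ioc 0 r ⊆ ⋃ n : ℕ, Icc (r / (n + 1)) r := by
    intro z hz
    obtain ⟨n, hn⟩ := exists_nat_ge (r / z)
    rw [div_le_iff₀ hz.1] at hn
    refine mem_iUnion.mpr ⟨n, ?_, hz.2⟩
    rw [div_le_iff₀ (by positivity)]
    nlinarith [hz.1]
  refine (aestronglyMeasurable_iUnion_iff.mpr fun n => ?_).mono_measure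
    (Measure.restrict_mono hcover le_rfl)
  exact (h.loc_int_b θ hθ _ r (by positivity) (div_le_self hr0.le (by simp)) hr).1

lemma integrableOn_drift (h : CondC ℓ b s) (hθ : θ ∈ Ico 0 (2 * π)) {r : ℝ}
    (hr : ENNReal.ofReal r < ℓ θ) :
    IntegrableOn (fun z => b z θ / s z θ ^ 2) (Ioc 0 r) := by
  rcases le_or_gt r 0 with hr0 | hr0
  · rw [Ioc_eq_empty (not_lt.mpr hr0)]
    exact integrableOn_empty
  obtain ⟨η, hη, -, C, hC⟩ := h.bound_near_origin
  set m := min r η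
  have hm : 0 < m := lt_min hr0 hη
  have hnear : IntegrableOn (fun z => b z θ / s z θ ^ 2) (Ioc 0 m) := by
    refine ⟨(aestronglyMeasurable_drift h hθ hr0 hr).mono_measure
      (Measure.restrict_mono (Ioc_subset_Ioc le_rfl (min_le_left r η)) le_rfl),
      HasFiniteIntegral.restrict_of_bounded (C := C) measure_Ioc_lt_top ?_⟩
    refine (ae_restrict_iff' measurableSet_Ioc).mpr (ae_of_all _ fun z hz => ?_)
    exact norm_div_sq_le_of_one_add_abs_div_sq_le
      (hC θ hθ z ⟨hz.1, hz.2.trans (min_le_right r η)⟩)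
  have hfar : IntegrableOn (fun z => b z θ / s z θ ^ 2) (Ioc m r) :=
    (h.loc_int_b θ hθ m r hm (min_le_left r η) hr).mono_set Ioc_subset_Icc_self
  rw [← Ioc_union_Ioc_eq_Ioc hm.le (min_le_left r η)]
  exact hnear.union hfar

lemma pprime_continuousOn (h : CondC ℓ b s) (hθ : θ ∈ Ico 0 (2 * π)) :
    ContinuousOn (pprime b s θ) (radialInterval (ℓ θ)) :=
  continuous_exp.comp_continuousOn (continuousOn_const.mul
    (continuousOn_primitive_radialInterval fun _ hr => integrableOn_drift h hθ hr.2))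

lemma pscale_isRadialScale (h : CondC ℓ b s) (hθ : θ ∈ Ico 0 (2 * π)) :
    IsRadialScale (pscale b s θ) (ℓ θ) (pEnd ℓ b s θ) :=
  isRadialScale_of_continuousOn
    (strictMonoOn_primitive_radialInterval (pprime_continuousOn h hθ) fun _ => exp_pos _)
    (continuousOn_primitive_radialInterval fun _ hr =>
      (((pprime_continuousOn h hθ).mono (Icc_subset_radialInterval hr)).integrableOn_Icc).mono_set
        Ioc_subset_Icc_self)
    intervalIntegral.integral_same

lemma pprime_mem_Icc_near_zero {η C : ℝ} (hη : 0 < η)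
    (hC : ∀ r ∈ Ioc 0 η, (1 + |b r θ|) / s r θ ^ 2 ≤ C) {y : ℝ} (hy : y ∈ Icc 0 η) :
    pprime b s θ y ∈ Icc (exp (-(2 * C * η))) (exp (2 * C * η)) := by
  have hC0 : 0 ≤ C := (by positivity : (0:ℝ) ≤ (1 + |b η θ|) / s η θ ^ 2).trans (hC η ⟨hη, le_rfl⟩)
  have hdrift : |∫ z in (0:ℝ)..y, b z θ / s z θ ^ 2| ≤ C * η := by
    have hle := intervalIntegral.norm_integral_le_of_norm_le_const
      (f := fun z => b z θ / s z θ ^ 2) (a := 0) (b := y) fun z hz => by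
        rw [uIoc_of_le hy.1] at hz
        exact norm_div_sq_le_of_one_add_abs_div_sq_le (hC z ⟨hz.1, hz.2.trans hy.2⟩)
    rw [Real.norm_eq_abs, sub_zero, abs_of_nonneg hy.1] at hle
    exact hle.trans (mul_le_mul_of_nonneg_left hy.2 hC0)
  rw [abs_le] at hdrift
  exact ⟨exp_le_exp.mpr (by linarith), exp_le_exp.mpr (by linarith)⟩

lemma pscale_near_zero (h : CondC ℓ b s) (hθ : θ ∈ Ico 0 (2 * π)) {η C : ℝ} (hη : 0 < η)
    (hηℓ : ENNReal.ofReal η < ℓ θ) (hC : ∀ r ∈ Ioc 0 η, (1 + |b r θ|) / s r θ ^ 2 ≤ C)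
    {r : ℝ} (hr : r ∈ Icc 0 η) :
    exp (-(2 * C * η)) * r ≤ pscale b s θ r ∧ pscale b s θ r ≤ exp (2 * C * η) * r := by
  have hint : IntervalIntegrable (pprime b s θ) volume 0 r := by
    refine ((pprime_continuousOn h hθ).mono ?_).intervalIntegrable
    rw [uIcc_of_le hr.1]
    exact Icc_subset_radialInterval ⟨hη.le, hηℓ⟩ |>.trans' (Icc_subset_Icc le_rfl hr.2)
  have hbounds := fun y (hy : y ∈ Icc 0 r) =>
    pprime_mem_Icc_near_zero hη hC ⟨hy.1, hy.2.trans hr.2⟩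
  have hlower := intervalIntegral.integral_mono_on hr.1 intervalIntegrable_const hint
    fun y hy => (hbounds y hy).1
  have hupper := intervalIntegral.integral_mono_on hr.1 hint intervalIntegrable_const
    fun y hy => (hbounds y hy).2
  rw [intervalIntegral.integral_const, smul_eq_mul, sub_zero, mul_comm] at hlower hupper
  exact ⟨hlower, hupper⟩

end ScaleFunction

/-- Under Condition (C), the scale mapping `𝒫` is a bijection from `I` onto `J`, and
both `𝒫` and its inverse `𝒬` are continuous with respect to the tree-metric. -/
theorem scale_mapping_tree_homeomorphism
    (ℓ : ℝ → ℝ≥0∞) (b s : ℝ → ℝ → ℝ) (h : CondC ℓ b s) :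
    Set.BijOn (Pmap b s) (Iset ℓ) (Jset ℓ b s) ∧
    (∀ x ∈ Iset ℓ, ∀ ε > (0:ℝ), ∃ δ > (0:ℝ), ∀ y ∈ Iset ℓ,
      treeDist x y < δ → treeDist (Pmap b s x) (Pmap b s y) < ε) ∧
    ∃ Q : EuclideanSpace ℝ (Fin 2) → EuclideanSpace ℝ (Fin 2),
      (∀ x ∈ Iset ℓ, Q (Pmap b s x) = x) ∧
      (∀ y ∈ Jset ℓ b s, Q y ∈ Iset ℓ ∧ Pmap b s (Q y) = y) ∧
      (∀ y ∈ Jset ℓ b s, ∀ ε > (0:ℝ), ∃ δ > (0:ℝ), ∀ z ∈ Jset ℓ b s,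
        treeDist y z < δ → treeDist (Q y) (Q z) < ε) := by
  obtain ⟨η, hη, hηℓ, C, hC⟩ := h.bound_near_origin
  have hηθ : ∀ θ ∈ Ico 0 (2 * π), ENNReal.ofReal η < ℓ θ :=
    fun θ hθ => hηℓ.trans_le (iInf₂_le θ hθ)
  -- `Pmap b s` is `radialMap (pscale b s)` and `Jset ℓ b s` is `Iset (pEnd ℓ b s)` by definition.
  exact radialMap_treeHomeomorph (fun θ hθ => pscale_isRadialScale h hθ) (exp_pos _)
    (fun θ hθ => ⟨hη.le, hηθ θ hθ⟩) hη
    (fun θ hθ r hr => pscale_near_zero h hθ hη (hηθ θ hθ) (hC θ hθ) hr)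
end

section
/- Under Condition (C), for every θ ∈ [0,2π) the function r ↦ v_θ(r)/p_θ(r) is strictly increasing on (0,ℓ(θ)), and lim_{r↓0} v_θ(r)/p_θ(r) = 0. In particular the limit (v_θ/p_θ)(ℓ(θ)−) := lim_{r↑ℓ(θ)} v_θ(r)/p_θ(r) exists in [0,∞]. -/
open MeasureTheory Set
open scoped Classical ENNReal

/-- The density `2/(p′_θ(z) s(z,θ)²)` of the speed measure. -/
noncomputable def mdens (b s : ℝ → ℝ → ℝ) (θ z : ℝ) : ℝ :=
  2 / (pprime b s θ z * (s z θ) ^ 2)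

/-- `v′_θ(r) = p′_θ(r) ∫₀^r 2/(p′_θ(z) s(z,θ)²) dz`, the derivative of the Feller
function. -/
noncomputable def vprime (b s : ℝ → ℝ → ℝ) (θ r : ℝ) : ℝ :=
  pprime b s θ r * ∫ z in (0:ℝ)..r, mdens b s θ z

/-- The Feller function `v_θ(r) = ∫₀^r p′_θ(y) (∫₀^y 2/(p′_θ(z) s(z,θ)²) dz) dy`. -/
noncomputable def vfeller (b s : ℝ → ℝ → ℝ) (θ r : ℝ) : ℝ :=
  ∫ y in (0:ℝ)..r, vprime b s θ y

/-! Since `v_θ(r) = ∫₀^r p′_θ M` and `p_θ(r) = ∫₀^r p′_θ` with `M(y) = ∫₀^y 2/(p′_θ s²)`, the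
ratio `v_θ/p_θ` is the average of `M` over `[0, r]` against the positive weight `p′_θ`. The bound
near the origin makes `b/s²` and `1/s²` integrable down to `0`, so `p′_θ` is continuous and
positive and `M` is continuous, strictly increasing and `M(0) = 0`. Averages of a strictly
increasing function over growing intervals increase strictly, and they lie between `0` and
`M(r) → 0`. The limit at `ℓ(θ)−` then exists in `[0, ∞]` by monotonicity. -/

open Filter Topology

theorem integrableOn_Ioc_of_integrableOn_Icc_of_bounded {E : Type*} [NormedAddCommGroup E]
    {f : ℝ → E} {a R η C : ℝ} (hη : a < η)
    (hloc : ∀ r, a < r → r ≤ R → IntegrableOn f (Icc r R))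
    (hbd : ∀ x ∈ Ioc a η, ‖f x‖ ≤ C) : IntegrableOn f (Ioc a R) := by
  rcases le_or_gt R a with hRa | haR
  · rw [Ioc_eq_empty hRa.not_gt]
    exact integrableOn_empty
  have hcover : Ioc a R ⊆ ⋃ n : ℕ, Icc (a + 1 / (n + 1)) R := fun x hx => by
    obtain ⟨n, hn⟩ := exists_nat_one_div_lt (sub_pos.2 hx.1)
    exact mem_iUnion.2 ⟨n, by linarith, hx.2⟩
  have hmeas : AEStronglyMeasurable f (volume.restrict (Ioc a R)) := by
    refine (aestronglyMeasurable_iUnion_iff.2 fun n => ?_).mono_set hcover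
    rcases le_or_gt (a + 1 / (n + 1)) R with hn | hn
    · exact (hloc _ (by linarith [Nat.one_div_pos_of_nat (α := ℝ) (n := n)]) hn).1
    · rw [Icc_eq_empty hn.not_ge, Measure.restrict_empty]
      exact aestronglyMeasurable_zero_measure f
  set m := min η R
  have ham : a < m := lt_min hη haR
  have hbot : IntegrableOn f (Ioc a m) := by
    refine ⟨hmeas.mono_set (Ioc_subset_Ioc_right (min_le_right _ _)),
      .restrict_of_bounded (C := C) measure_Ioc_lt_top ?_⟩
    filter_upwards [ae_restrict_mem measurableSet_Ioc] with x hx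
    exact hbd x ⟨hx.1, hx.2.trans (min_le_left _ _)⟩
  rw [← Ioc_union_Ioc_eq_Ioc ham.le (min_le_right _ _)]
  exact hbot.union ((hloc m ham (min_le_right _ _)).mono_set Ioc_subset_Icc_self)

theorem strictMonoOn_primitive_of_pos {m : ℝ → ℝ} {a R : ℝ}
    (hm : IntervalIntegrable m volume a R) (hpos : ∀ x ∈ Ioo a R, 0 < m x) :
    StrictMonoOn (fun y => ∫ x in a..y, m x) (Icc a R) := by
  intro y₁ hy₁ y₂ hy₂ hlt
  have hint : ∀ c ∈ Icc a R, IntervalIntegrable m volume a c := fun c hc =>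
    hm.mono_set (uIcc_subset_uIcc left_mem_uIcc (Icc_subset_uIcc hc))
  have hint₁₂ := (hint y₁ hy₁).symm.trans (hint y₂ hy₂)
  have hsplit := intervalIntegral.integral_add_adjacent_intervals (hint y₁ hy₁) hint₁₂
  have hgap : 0 < ∫ x in y₁..y₂, m x :=
    intervalIntegral.intervalIntegral_pos_of_pos_on hint₁₂ (fun x hx => hpos x ⟨hy₁.1.trans_lt hx.1, hx.2.trans_le hy₂.2⟩) hlt
  show ∫ x in a..y₁, m x < ∫ x in a..y₂, m x
  linarith

theorem ENNReal.exists_tendsto_comap_ofReal_nhdsLT {g : ℝ → ℝ≥0∞} {L : ℝ≥0∞} (hL : 0 < L)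
    (hg : MonotoneOn g (ENNReal.ofReal ⁻¹' Ioo 0 L)) :
    ∃ l, Tendsto g (comap ENNReal.ofReal (𝓝[<] L)) (𝓝 l) := by
  have hS : ENNReal.ofReal ⁻¹' Ioo 0 L ∈ comap ENNReal.ofReal (𝓝[<] L) :=
    preimage_mem_comap (Ioo_mem_nhdsLT hL)
  refine ⟨⨆ r ∈ ENNReal.ofReal ⁻¹' Ioo 0 L, g r, tendsto_order.2 ⟨fun c hc => ?_, fun c hc => ?_⟩⟩
  · obtain ⟨r₀, hr₀, hc₀⟩ := lt_biSup_iff.1 hc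
    filter_upwards [hS, preimage_mem_comap (Ioo_mem_nhdsLT hr₀.2)] with r hr hr₀r
    exact hc₀.trans_le (hg hr₀ hr (ENNReal.ofReal_lt_ofReal_iff'.1 hr₀r.1).1.le)
  · filter_upwards [hS] with r hr
    exact (le_biSup g hr).trans_lt hc

noncomputable def weightedAverage (w f : ℝ → ℝ) (a r : ℝ) : ℝ :=
  (∫ x in a..r, w x * f x) / ∫ x in a..r, w x

section WeightedAverage

variable {w f : ℝ → ℝ} {a R : ℝ}

theorem integral_weight_pos (hw : ∀ x ∈ Ioo a R, 0 < w x)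
    (hwi : IntervalIntegrable w volume a R) {r : ℝ} (hr : r ∈ Ioc a R) :
    0 < ∫ x in a..r, w x :=
  intervalIntegral.intervalIntegral_pos_of_pos_on
    (hwi.mono_set (uIcc_subset_uIcc_left (Icc_subset_uIcc (Ioc_subset_Icc_self hr))))
    (fun x hx => hw x ⟨hx.1, hx.2.trans_le hr.2⟩) hr.1

theorem le_weightedAverage {c : ℝ} (hw : ∀ x ∈ Ioo a R, 0 < w x)
    (hwi : IntervalIntegrable w volume a R)
    (hwfi : IntervalIntegrable (fun x => w x * f x) volume a R)
    (hc : ∀ x ∈ Ioc a R, c ≤ f x) {r : ℝ} (hr : r ∈ Ioc a R) :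
    c ≤ weightedAverage w f a r := by
  have hsub : uIcc a r ⊆ uIcc a R :=
    uIcc_subset_uIcc_left (Icc_subset_uIcc (Ioc_subset_Icc_self hr))
  rw [weightedAverage, le_div_iff₀ (integral_weight_pos hw hwi hr),
    ← intervalIntegral.integral_const_mul]
  refine intervalIntegral.integral_mono_on_of_le_Ioo hr.1.le ((hwi.mono_set hsub).const_mul c)
    (hwfi.mono_set hsub) fun x hx => ?_
  rw [mul_comm c]
  exact mul_le_mul_of_nonneg_left (hc x ⟨hx.1, hx.2.le.trans hr.2⟩)
    (hw x ⟨hx.1, hx.2.trans_le hr.2⟩).le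

theorem weightedAverage_lt (hw : ∀ x ∈ Ioo a R, 0 < w x)
    (hwi : IntervalIntegrable w volume a R)
    (hwfi : IntervalIntegrable (fun x => w x * f x) volume a R)
    (hf : StrictMonoOn f (Ioc a R)) {r : ℝ} (hr : r ∈ Ioc a R) :
    weightedAverage w f a r < f r := by
  have hsub : uIcc a r ⊆ uIcc a R :=
    uIcc_subset_uIcc_left (Icc_subset_uIcc (Ioc_subset_Icc_self hr))
  have hwi' := (hwi.mono_set hsub).const_mul (f r)
  have hwfi' := hwfi.mono_set hsub
  have hgap : 0 < ∫ x in a..r, (f r * w x - w x * f x) :=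
    intervalIntegral.intervalIntegral_pos_of_pos_on (hwi'.sub hwfi') (fun x hx => by
      have hfx : f x < f r := hf ⟨hx.1, hx.2.le.trans hr.2⟩ hr hx.2
      have hwx : 0 < w x := hw x ⟨hx.1, hx.2.trans_le hr.2⟩
      nlinarith) hr.1
  rw [intervalIntegral.integral_sub hwi' hwfi', intervalIntegral.integral_const_mul] at hgap
  rw [weightedAverage, div_lt_iff₀ (integral_weight_pos hw hwi hr)]
  linarith

theorem weightedAverage_strictMonoOn (hw : ∀ x ∈ Ioo a R, 0 < w x)
    (hwi : IntervalIntegrable w volume a R)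
    (hwfi : IntervalIntegrable (fun x => w x * f x) volume a R)
    (hf : StrictMonoOn f (Ioc a R)) :
    StrictMonoOn (weightedAverage w f a) (Ioc a R) := by
  intro r₁ hr₁ r₂ hr₂ hlt
  have hmem₁ := Icc_subset_uIcc (Ioc_subset_Icc_self hr₁)
  have hsub₁ : uIcc a r₁ ⊆ uIcc a R := uIcc_subset_uIcc_left hmem₁
  have hsub₂ : uIcc r₁ R ⊆ uIcc a R := uIcc_subset_uIcc_right hmem₁
  have hsub₁₂ : uIcc r₁ r₂ ⊆ uIcc a R :=
    uIcc_subset_uIcc hmem₁ (Icc_subset_uIcc (Ioc_subset_Icc_self hr₂))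
  -- The average over `[a, r₁]` is below `f r₁`, the average over `[r₁, r₂]` is at least `f r₁`.
  have hhead := weightedAverage_lt hw hwi hwfi hf hr₁
  have htail : f r₁ ≤ weightedAverage w f r₁ r₂ :=
    le_weightedAverage (fun x hx => hw x ⟨hr₁.1.trans hx.1, hx.2⟩) (hwi.mono_set hsub₂)
      (hwfi.mono_set hsub₂) (fun x hx => hf.monotoneOn hr₁ ⟨hr₁.1.trans hx.1, hx.2⟩ hx.1.le)
      ⟨hlt, hr₂.2⟩
  have hB₁ := integral_weight_pos hw hwi hr₁
  have hB := integral_weight_pos (fun x hx => hw x ⟨hr₁.1.trans hx.1, hx.2⟩)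
    (hwi.mono_set hsub₂) ⟨hlt, hr₂.2⟩
  rw [weightedAverage, div_lt_iff₀ hB₁] at hhead
  rw [weightedAverage, le_div_iff₀ hB] at htail
  rw [weightedAverage, weightedAverage,
    ← intervalIntegral.integral_add_adjacent_intervals (hwi.mono_set hsub₁) (hwi.mono_set hsub₁₂),
    ← intervalIntegral.integral_add_adjacent_intervals (hwfi.mono_set hsub₁)
      (hwfi.mono_set hsub₁₂), div_lt_div_iff₀ hB₁ (add_pos hB₁ hB)]
  nlinarith [mul_lt_mul_of_pos_right hhead hB, mul_le_mul_of_nonneg_right htail hB₁.le]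

theorem tendsto_weightedAverage_nhdsGT {c : ℝ} (haR : a < R) (hw : ∀ x ∈ Ioo a R, 0 < w x)
    (hwi : IntervalIntegrable w volume a R)
    (hwfi : IntervalIntegrable (fun x => w x * f x) volume a R)
    (hf : StrictMonoOn f (Ioc a R)) (hc : ∀ x ∈ Ioc a R, c ≤ f x)
    (hlim : Tendsto f (𝓝[>] a) (𝓝 c)) :
    Tendsto (weightedAverage w f a) (𝓝[>] a) (𝓝 c) :=
  tendsto_of_tendsto_of_tendsto_of_le_of_le' tendsto_const_nhds hlim
    (eventually_of_mem (Ioc_mem_nhdsGT haR) fun _ hr => le_weightedAverage hw hwi hwfi hc hr)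
    (eventually_of_mem (Ioc_mem_nhdsGT haR) fun _ hr => (weightedAverage_lt hw hwi hwfi hf hr).le)

end WeightedAverage

section Ray

variable {b s : ℝ → ℝ → ℝ} {θ R : ℝ}

theorem pprime_pos (y : ℝ) : 0 < pprime b s θ y :=
  Real.exp_pos _

theorem continuousOn_pprime (hb : IntervalIntegrable (fun z => b z θ / s z θ ^ 2) volume 0 R) :
    ContinuousOn (pprime b s θ) (uIcc 0 R) :=
  Real.continuous_exp.comp_continuousOn
    (continuousOn_const.mul (intervalIntegral.continuousOn_primitive_interval' hb left_mem_uIcc))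

theorem intervalIntegrable_mdens
    (hb : IntervalIntegrable (fun z => b z θ / s z θ ^ 2) volume 0 R)
    (hs : IntervalIntegrable (fun z => 1 / s z θ ^ 2) volume 0 R) :
    IntervalIntegrable (mdens b s θ) volume 0 R := by
  have hcont : ContinuousOn (fun z => 2 / pprime b s θ z) (uIcc 0 R) :=
    continuousOn_const.div (continuousOn_pprime hb) fun z _ => (pprime_pos z).ne'
  convert hs.continuousOn_mul hcont using 2 with z
  rw [mdens, div_mul_div_comm, mul_one]

theorem mdens_pos {z : ℝ} (hs : s z θ ≠ 0) : 0 < mdens b s θ z :=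
  div_pos two_pos (mul_pos (pprime_pos z) (pow_two_pos_of_ne_zero hs))

theorem continuousOn_speed (hb : IntervalIntegrable (fun z => b z θ / s z θ ^ 2) volume 0 R)
    (hs : IntervalIntegrable (fun z => 1 / s z θ ^ 2) volume 0 R) :
    ContinuousOn (fun y => ∫ z in (0:ℝ)..y, mdens b s θ z) (uIcc 0 R) :=
  intervalIntegral.continuousOn_primitive_interval' (intervalIntegrable_mdens hb hs)
    left_mem_uIcc

theorem vfeller_div_pscale_eq_weightedAverage :
    (fun r => vfeller b s θ r / pscale b s θ r) =
      weightedAverage (pprime b s θ) (fun y => ∫ z in (0:ℝ)..y, mdens b s θ z) 0 :=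
  rfl

end Ray

namespace CondC

variable {ℓ : ℝ → ℝ≥0∞} {b s : ℝ → ℝ → ℝ} {θ R : ℝ}

theorem intervalIntegrable_drift (h : CondC ℓ b s) (hθ : θ ∈ Ico 0 (2 * Real.pi))
    (hR0 : 0 ≤ R) (hR : ENNReal.ofReal R < ℓ θ) :
    IntervalIntegrable (fun z => b z θ / s z θ ^ 2) volume 0 R := by
  obtain ⟨η, hη, -, C, hC⟩ := h.bound_near_origin
  refine (intervalIntegrable_iff_integrableOn_Ioc_of_le hR0).2
    (integrableOn_Ioc_of_integrableOn_Icc_of_bounded (C := C) hη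
      (fun r hr hrR => h.loc_int_b θ hθ r R hr hrR hR) fun r hr => ?_)
  calc ‖b r θ / s r θ ^ 2‖ = |b r θ| / s r θ ^ 2 := by
        rw [Real.norm_eq_abs, abs_div, abs_of_nonneg (sq_nonneg (s r θ))]
    _ ≤ (1 + |b r θ|) / s r θ ^ 2 := div_le_div_of_nonneg_right (by linarith) (sq_nonneg _)
    _ ≤ C := hC θ hθ r hr

theorem intervalIntegrable_inv_sq (h : CondC ℓ b s) (hθ : θ ∈ Ico 0 (2 * Real.pi))
    (hR0 : 0 ≤ R) (hR : ENNReal.ofReal R < ℓ θ) :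
    IntervalIntegrable (fun z => 1 / s z θ ^ 2) volume 0 R := by
  obtain ⟨η, hη, -, C, hC⟩ := h.bound_near_origin
  refine (intervalIntegrable_iff_integrableOn_Ioc_of_le hR0).2
    (integrableOn_Ioc_of_integrableOn_Icc_of_bounded (C := C) hη
      (fun r hr hrR => h.loc_int_s θ hθ r R hr hrR hR) fun r hr => ?_)
  calc ‖1 / s r θ ^ 2‖ = 1 / s r θ ^ 2 := by
        rw [Real.norm_eq_abs, abs_of_nonneg (by positivity)]
    _ ≤ (1 + |b r θ|) / s r θ ^ 2 :=
        div_le_div_of_nonneg_right (by linarith [abs_nonneg (b r θ)]) (sq_nonneg _)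
    _ ≤ C := hC θ hθ r hr

theorem strictMonoOn_speed (h : CondC ℓ b s) (hθ : θ ∈ Ico 0 (2 * Real.pi))
    (hR0 : 0 ≤ R) (hR : ENNReal.ofReal R < ℓ θ) :
    StrictMonoOn (fun y => ∫ z in (0:ℝ)..y, mdens b s θ z) (Icc 0 R) :=
  strictMonoOn_primitive_of_pos
    (intervalIntegrable_mdens (h.intervalIntegrable_drift hθ hR0 hR)
      (h.intervalIntegrable_inv_sq hθ hR0 hR))
    fun z hz => mdens_pos (h.s_ne θ hθ z hz.1 ((ENNReal.ofReal_le_ofReal hz.2.le).trans_lt hR))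

theorem strictMonoOn_feller_ratio (h : CondC ℓ b s) (hθ : θ ∈ Ico 0 (2 * Real.pi))
    (hR0 : 0 ≤ R) (hR : ENNReal.ofReal R < ℓ θ) :
    StrictMonoOn (fun r => vfeller b s θ r / pscale b s θ r) (Ioc 0 R) := by
  have hb := h.intervalIntegrable_drift hθ hR0 hR
  have hs := h.intervalIntegrable_inv_sq hθ hR0 hR
  rw [vfeller_div_pscale_eq_weightedAverage]
  exact weightedAverage_strictMonoOn (fun y _ => pprime_pos y)
    (continuousOn_pprime hb).intervalIntegrable
    ((continuousOn_pprime hb).mul (continuousOn_speed hb hs)).intervalIntegrable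
    ((h.strictMonoOn_speed hθ hR0 hR).mono Ioc_subset_Icc_self)

theorem tendsto_feller_ratio_nhdsGT_zero (h : CondC ℓ b s) (hθ : θ ∈ Ico 0 (2 * Real.pi)) :
    Tendsto (fun r => vfeller b s θ r / pscale b s θ r) (𝓝[>] 0) (𝓝 0) := by
  obtain ⟨η, hη, hηℓ, -⟩ := h.bound_near_origin
  replace hηℓ : ENNReal.ofReal η < ℓ θ := hηℓ.trans_le (iInf₂_le θ hθ)
  have hb := h.intervalIntegrable_drift hθ hη.le hηℓ
  have hs := h.intervalIntegrable_inv_sq hθ hη.le hηℓ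
  have hM := h.strictMonoOn_speed hθ hη.le hηℓ
  have hM0 : Tendsto (fun y => ∫ z in (0:ℝ)..y, mdens b s θ z) (𝓝[>] 0) (𝓝 0) := by
    have := ((continuousOn_speed hb hs) 0 left_mem_uIcc).mono_of_mem_nhdsWithin
      (uIcc_of_le hη.le ▸ Icc_mem_nhdsGT hη)
    simpa using this.tendsto
  rw [vfeller_div_pscale_eq_weightedAverage]
  refine tendsto_weightedAverage_nhdsGT hη (fun y _ => pprime_pos y)
    (continuousOn_pprime hb).intervalIntegrable
    ((continuousOn_pprime hb).mul (continuousOn_speed hb hs)).intervalIntegrable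
    (hM.mono Ioc_subset_Icc_self) (fun y hy => ?_) hM0
  simpa using (hM (left_mem_Icc.2 hη.le) (Ioc_subset_Icc_self hy) hy.1).le

end CondC
/-- Under Condition (C), along each ray the ratio `v_θ/p_θ` is strictly increasing on
`(0, ℓ(θ))` and tends to `0` as `r ↓ 0`; in particular it has a (possibly infinite)
limit as `r ↑ ℓ(θ)`. -/
theorem feller_ratio_strictMono
    (ℓ : ℝ → ℝ≥0∞) (b s : ℝ → ℝ → ℝ) (h : CondC ℓ b s) :
    ∀ θ ∈ Ico (0:ℝ) (2 * Real.pi),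
      (∀ r₁ r₂ : ℝ, 0 < r₁ → r₁ < r₂ → ENNReal.ofReal r₂ < ℓ θ →
        vfeller b s θ r₁ / pscale b s θ r₁ < vfeller b s θ r₂ / pscale b s θ r₂) ∧
      Filter.Tendsto (fun r => vfeller b s θ r / pscale b s θ r)
        (nhdsWithin 0 (Ioi 0)) (nhds 0) ∧
      ∃ L : ℝ≥0∞,
        Filter.Tendsto (fun r => ENNReal.ofReal (vfeller b s θ r / pscale b s θ r))
          (Filter.comap ENNReal.ofReal (nhdsWithin (ℓ θ) (Iio (ℓ θ)))) (nhds L) := by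
  intro θ hθ
  have hℓ : 0 < ℓ θ := h.ell_pos.trans_le (iInf₂_le θ hθ)
  refine ⟨fun r₁ r₂ h₁ h₁₂ h₂ => ?_, h.tendsto_feller_ratio_nhdsGT_zero hθ,
    ENNReal.exists_tendsto_comap_ofReal_nhdsLT hℓ ?_⟩
  · exact h.strictMonoOn_feller_ratio hθ (h₁.trans h₁₂).le h₂ ⟨h₁, h₁₂.le⟩
      ⟨h₁.trans h₁₂, le_rfl⟩ h₁₂
  · rintro r₁ ⟨h₁, -⟩ r₂ ⟨h₂, h₂ℓ⟩ h₁₂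
    have hr₂ := ENNReal.ofReal_pos.1 h₂
    exact ENNReal.ofReal_le_ofReal
      ((h.strictMonoOn_feller_ratio hθ hr₂.le h₂ℓ).monotoneOn
        ⟨ENNReal.ofReal_pos.1 h₁, h₁₂⟩ ⟨hr₂, le_rfl⟩ h₁₂)
end

section
/- Let c ≥ U(0) and suppose that for some interval (r₁,r₂) ⊆ [0,1] one has U⁽ᶜ⁾(r) > U(r) for every r ∈ (r₁,r₂). Then U⁽ᶜ⁾ is an affine transformation of p on [r₁,r₂]: there exist real constants a and b such that U⁽ᶜ⁾(r) = a·p(r) + b for every r ∈ [r₁,r₂]. -/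
open scoped Classical

/-- A function `φ : [0,1] → ℝ` is `p`-concave if `φ = ψ ∘ p` on `[0,1]` for some
continuous concave function `ψ : [0, p(1)] → ℝ`. -/
def PConcave (p φ : ℝ → ℝ) : Prop :=
  ∃ ψ : ℝ → ℝ, ContinuousOn ψ (Set.Icc 0 (p 1)) ∧ ConcaveOn ℝ (Set.Icc 0 (p 1)) ψ ∧
    ∀ r ∈ Set.Icc (0:ℝ) 1, φ r = ψ (p r)

/-- `U⁽ᶜ⁾(r)`: the pointwise infimum over all `p`-concave majorants `φ` of `U` on `[0,1]`
with `φ(0) ≥ c`. -/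
noncomputable def Uc (p U : ℝ → ℝ) (c r : ℝ) : ℝ :=
  sInf {y : ℝ | ∃ φ : ℝ → ℝ, PConcave p φ ∧ (∀ t ∈ Set.Icc (0:ℝ) 1, U t ≤ φ t) ∧
    c ≤ φ 0 ∧ y = φ r}

/-!
`U⁽ᶜ⁾` is an infimum of `p`-concave functions, hence itself `p`-concave (so it lies above the
function `a p + b` interpolating its values at `r₁`, `r₂`) and upper semicontinuous. Conversely,
near a point where `U < U⁽ᶜ⁾`, continuity of `U` and lower semicontinuity of the `p`-concave `U⁽ᶜ⁾`
give a small interval `[u, w]` on which `U ≤ min (U⁽ᶜ⁾ u) (U⁽ᶜ⁾ w)`; there every admissible function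
may be cut down to its `p`-chord over `[u, w]`, so `U⁽ᶜ⁾` lies below its own chord. This rules out a
positive maximum of `U⁽ᶜ⁾ - (a p + b)` inside `(r₁, r₂)`.
-/

open Set Filter Topology

lemma ConcaveOn.chord_le {s : Set ℝ} {ψ : ℝ → ℝ} (hψ : ConcaveOn ℝ s ψ) {u x w : ℝ}
    (hu : u ∈ s) (hw : w ∈ s) (hux : u ≤ x) (hxw : x ≤ w) :
    (w - x) * ψ u + (x - u) * ψ w ≤ (w - u) * ψ x := by
  rcases hux.eq_or_lt with rfl | hux
  · linarith
  rcases hxw.eq_or_lt with rfl | hxw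
  · linarith
  have hslope := hψ.slope_anti_adjacent hu hw hux hxw
  rw [div_le_div_iff₀ (by linarith) (by linarith)] at hslope
  linear_combination hslope

lemma concaveOn_affine {s : Set ℝ} (hs : Convex ℝ s) (a k b : ℝ) :
    ConcaveOn ℝ s (fun x => a + k * (x - b)) :=
  ⟨hs, fun x _ y _ u v _ _ huv => by
    simp only [smul_eq_mul]
    exact le_of_eq (by linear_combination (a - k * b) * huv)⟩

def Admissible (p U : ℝ → ℝ) (c : ℝ) (φ : ℝ → ℝ) : Prop :=
  PConcave p φ ∧ (∀ t ∈ Icc (0:ℝ) 1, U t ≤ φ t) ∧ c ≤ φ 0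

lemma Uc_eq_iInf (p U : ℝ → ℝ) (c r : ℝ) :
    Uc p U c r = ⨅ φ : {φ // Admissible p U c φ}, φ.1 r := by
  refine congrArg sInf (Set.ext fun y => ⟨?_, ?_⟩)
  · rintro ⟨φ, h₁, h₂, h₃, rfl⟩
    exact ⟨⟨φ, h₁, h₂, h₃⟩, rfl⟩
  · rintro ⟨⟨φ, h₁, h₂, h₃⟩, rfl⟩
    exact ⟨φ, h₁, h₂, h₃, rfl⟩

section

variable {p U : ℝ → ℝ} {c : ℝ}

lemma mapsTo_Icc_of_monotoneOn (hpm : MonotoneOn p (Icc 0 1)) (hp0 : 0 ≤ p 0) :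
    MapsTo p (Icc 0 1) (Icc 0 (p 1)) := fun _ ht =>
  ⟨hp0.trans (hpm (left_mem_Icc.2 zero_le_one) ht ht.1),
    hpm ht (right_mem_Icc.2 zero_le_one) ht.2⟩

lemma PConcave.continuousOn {φ : ℝ → ℝ} (hφ : PConcave p φ) (hpc : ContinuousOn p (Icc 0 1))
    (hpm : MonotoneOn p (Icc 0 1)) (hp0 : 0 ≤ p 0) : ContinuousOn φ (Icc 0 1) := by
  obtain ⟨ψ, hψc, -, hφψ⟩ := hφ
  exact (hψc.comp hpc (mapsTo_Icc_of_monotoneOn hpm hp0)).congr hφψ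

lemma PConcave.inf {φ₁ φ₂ : ℝ → ℝ} (h₁ : PConcave p φ₁) (h₂ : PConcave p φ₂) :
    PConcave p (φ₁ ⊓ φ₂) := by
  obtain ⟨ψ₁, hc₁, hk₁, he₁⟩ := h₁
  obtain ⟨ψ₂, hc₂, hk₂, he₂⟩ := h₂
  exact ⟨ψ₁ ⊓ ψ₂, hc₁.inf hc₂, hk₁.inf hk₂, fun r hr => by simp [he₁ r hr, he₂ r hr]⟩

lemma PConcave.chord_le {φ : ℝ → ℝ} (hφ : PConcave p φ) (hpm : MonotoneOn p (Icc 0 1))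
    (hp0 : 0 ≤ p 0) {u x w : ℝ} (hu : u ∈ Icc (0:ℝ) 1) (hx : x ∈ Icc (0:ℝ) 1)
    (hw : w ∈ Icc (0:ℝ) 1) (hux : u ≤ x) (hxw : x ≤ w) :
    (p w - p x) * φ u + (p x - p u) * φ w ≤ (p w - p u) * φ x := by
  obtain ⟨ψ, -, hψ, hφψ⟩ := hφ
  rw [hφψ u hu, hφψ x hx, hφψ w hw]
  exact hψ.chord_le (mapsTo_Icc_of_monotoneOn hpm hp0 hu) (mapsTo_Icc_of_monotoneOn hpm hp0 hw)
    (hpm hu hx hux) (hpm hx hw hxw)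

noncomputable def pChord (p φ : ℝ → ℝ) (u w : ℝ) : ℝ → ℝ :=
  fun t => φ u + (φ w - φ u) / (p w - p u) * (p t - p u)

lemma pChord_mul {φ : ℝ → ℝ} {u w : ℝ} (h : p u ≠ p w) (t : ℝ) :
    (p w - p u) * pChord p φ u w t = (p w - p t) * φ u + (p t - p u) * φ w := by
  unfold pChord
  field_simp [sub_ne_zero.2 h.symm]
  ring

lemma pConcave_pChord (φ : ℝ → ℝ) (u w : ℝ) : PConcave p (pChord p φ u w) :=
  ⟨fun x => φ u + (φ w - φ u) / (p w - p u) * (x - p u), by fun_prop,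
    concaveOn_affine (convex_Icc _ _) _ _ _, fun _ _ => rfl⟩

lemma min_le_pChord {φ : ℝ → ℝ} (hpm : MonotoneOn p (Icc 0 1)) {u w t : ℝ}
    (hu : u ∈ Icc (0:ℝ) 1) (hw : w ∈ Icc (0:ℝ) 1) (hp : p u < p w) (ht : t ∈ Icc u w) :
    min (φ u) (φ w) ≤ pChord p φ u w t := by
  have ht01 : t ∈ Icc (0:ℝ) 1 := ⟨hu.1.trans ht.1, ht.2.trans hw.2⟩
  have h₁ := hpm hu ht01 ht.1
  have h₂ := hpm ht01 hw ht.2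
  have hmul := pChord_mul (φ := φ) hp.ne t
  nlinarith [min_le_left (φ u) (φ w), min_le_right (φ u) (φ w)]

lemma PConcave.le_pChord {φ : ℝ → ℝ} (hφ : PConcave p φ) (hpm : MonotoneOn p (Icc 0 1))
    (hp0 : 0 ≤ p 0) {u w t : ℝ} (hu : u ∈ Icc (0:ℝ) 1) (hw : w ∈ Icc (0:ℝ) 1)
    (hp : p u < p w) (ht : t ∈ Icc (0:ℝ) 1) (hout : t ∉ Ioo u w) :
    φ t ≤ pChord p φ u w t := by
  have hmul := pChord_mul (φ := φ) hp.ne t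
  have huw : u ≤ w := (hpm.reflect_lt hu hw hp).le
  rcases not_and_or.1 hout with htu | hwt
  · have htu := le_of_not_gt htu
    have := hφ.chord_le hpm hp0 ht hu hw htu huw
    nlinarith [hpm ht hu htu]
  · have hwt := le_of_not_gt hwt
    have := hφ.chord_le hpm hp0 hu hw ht huw hwt
    nlinarith [hpm hw ht hwt]

lemma Admissible.inf {φ₁ φ₂ : ℝ → ℝ} (h₁ : Admissible p U c φ₁) (h₂ : Admissible p U c φ₂) :
    Admissible p U c (φ₁ ⊓ φ₂) :=
  ⟨h₁.1.inf h₂.1, fun t ht => le_inf (h₁.2.1 t ht) (h₂.2.1 t ht), le_inf h₁.2.2 h₂.2.2⟩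

lemma Admissible.inf_pChord {φ : ℝ → ℝ} (hφ : Admissible p U c φ)
    (hpm : MonotoneOn p (Icc 0 1)) (hp0 : 0 ≤ p 0) {u w : ℝ} (hu : u ∈ Icc (0:ℝ) 1)
    (hw : w ∈ Icc (0:ℝ) 1) (hp : p u < p w) (hUφ : ∀ t ∈ Icc u w, U t ≤ min (φ u) (φ w)) :
    Admissible p U c (φ ⊓ pChord p φ u w) := by
  refine ⟨hφ.1.inf (pConcave_pChord φ u w), fun t ht => le_inf (hφ.2.1 t ht) ?_, ?_⟩
  · by_cases htuw : t ∈ Icc u w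
    · exact (hUφ t htuw).trans (min_le_pChord hpm hu hw hp htuw)
    · exact (hφ.2.1 t ht).trans
        (hφ.1.le_pChord hpm hp0 hu hw hp ht fun h => htuw (Ioo_subset_Icc_self h))
  · exact le_inf hφ.2.2 (hφ.2.2.trans (hφ.1.le_pChord hpm hp0 hu hw hp
      (left_mem_Icc.2 zero_le_one) fun h => hu.1.not_gt h.1))

lemma nonempty_admissible (hU : ContinuousOn U (Icc 0 1)) :
    Nonempty {φ // Admissible p U c φ} := by
  obtain ⟨K, hK⟩ := (isCompact_Icc.bddAbove_image hU)
  refine ⟨fun _ => max K c, ⟨fun _ => max K c, continuousOn_const,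
    concaveOn_const _ (convex_Icc _ _), fun _ _ => rfl⟩, fun t ht => ?_, le_max_right _ _⟩
  exact (hK ⟨t, ht, rfl⟩).trans (le_max_left _ _)

lemma bddBelow_admissible_apply {r : ℝ} (hr : r ∈ Icc (0:ℝ) 1) :
    BddBelow (range fun φ : {φ // Admissible p U c φ} => φ.1 r) :=
  ⟨U r, by rintro _ ⟨φ, rfl⟩; exact φ.2.2.1 r hr⟩

lemma Uc_le_of_admissible {φ : ℝ → ℝ} (hφ : Admissible p U c φ) {r : ℝ}
    (hr : r ∈ Icc (0:ℝ) 1) : Uc p U c r ≤ φ r := by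
  rw [Uc_eq_iInf]
  exact ciInf_le (bddBelow_admissible_apply hr) ⟨φ, hφ⟩

lemma upperSemicontinuousOn_Uc (hpc : ContinuousOn p (Icc 0 1))
    (hpm : MonotoneOn p (Icc 0 1)) (hp0 : 0 ≤ p 0) :
    UpperSemicontinuousOn (Uc p U c) (Icc 0 1) := by
  rw [show Uc p U c = fun r => ⨅ φ : {φ // Admissible p U c φ}, φ.1 r from
    funext (Uc_eq_iInf p U c)]
  exact upperSemicontinuousOn_ciInf (fun _ hr => bddBelow_admissible_apply hr)
    fun φ => (φ.2.1.continuousOn hpc hpm hp0).upperSemicontinuousOn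

lemma Uc_chord_le (hpm : MonotoneOn p (Icc 0 1)) (hp0 : 0 ≤ p 0)
    (hU : ContinuousOn U (Icc 0 1)) {u x w : ℝ} (hu : u ∈ Icc (0:ℝ) 1) (hx : x ∈ Icc (0:ℝ) 1)
    (hw : w ∈ Icc (0:ℝ) 1) (hux : u ≤ x) (hxw : x ≤ w) :
    (p w - p x) * Uc p U c u + (p x - p u) * Uc p U c w ≤ (p w - p u) * Uc p U c x := by
  have := nonempty_admissible (p := p) (c := c) hU
  rw [Uc_eq_iInf p U c x, Real.mul_iInf_of_nonneg (sub_nonneg.2 (hpm hu hw (hux.trans hxw)))]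
  refine le_ciInf fun φ => ?_
  have hφu := Uc_le_of_admissible φ.2 hu
  have hφw := Uc_le_of_admissible φ.2 hw
  have := φ.2.1.chord_le hpm hp0 hu hx hw hux hxw
  nlinarith [hpm hu hx hux, hpm hx hw hxw]


lemma Uc_mul_le_chord_of_admissible (hpm : MonotoneOn p (Icc 0 1)) (hp0 : 0 ≤ p 0)
    {u s w m : ℝ} (hu : u ∈ Icc (0:ℝ) 1) (hw : w ∈ Icc (0:ℝ) 1) (hp : p u < p w)
    (hs : s ∈ Icc u w) (hUm : ∀ t ∈ Icc u w, U t ≤ m) (hmu : m ≤ Uc p U c u)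
    (hmw : m ≤ Uc p U c w) {φ₁ φ₂ : ℝ → ℝ} (h₁ : Admissible p U c φ₁)
    (h₂ : Admissible p U c φ₂) :
    (p w - p u) * Uc p U c s ≤ (p w - p s) * φ₁ u + (p s - p u) * φ₂ w := by
  have hs01 : s ∈ Icc (0:ℝ) 1 := ⟨hu.1.trans hs.1, hs.2.trans hw.2⟩
  have hφ := h₁.inf h₂
  have hcut := hφ.inf_pChord hpm hp0 hu hw hp fun t ht => le_min
    ((hUm t ht).trans (hmu.trans (Uc_le_of_admissible hφ hu)))
    ((hUm t ht).trans (hmw.trans (Uc_le_of_admissible hφ hw)))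
  have hUc_le : Uc p U c s ≤ pChord p (φ₁ ⊓ φ₂) u w s :=
    (Uc_le_of_admissible hcut hs01).trans inf_le_right
  have hmul := pChord_mul (φ := φ₁ ⊓ φ₂) hp.ne s
  have hsu := hpm hu hs01 hs.1
  have hws := hpm hs01 hw hs.2
  have hinf₁ : (φ₁ ⊓ φ₂) u ≤ φ₁ u := inf_le_left
  have hinf₂ : (φ₁ ⊓ φ₂) w ≤ φ₂ w := inf_le_right
  nlinarith

lemma Uc_mul_le_chord (hpm : MonotoneOn p (Icc 0 1)) (hp0 : 0 ≤ p 0)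
    (hU : ContinuousOn U (Icc 0 1)) {u s w m : ℝ} (hu : u ∈ Icc (0:ℝ) 1)
    (hw : w ∈ Icc (0:ℝ) 1) (hp : p u < p w) (hs : s ∈ Icc u w)
    (hUm : ∀ t ∈ Icc u w, U t ≤ m) (hmu : m ≤ Uc p U c u) (hmw : m ≤ Uc p U c w) :
    (p w - p u) * Uc p U c s ≤ (p w - p s) * Uc p U c u + (p s - p u) * Uc p U c w := by
  have hs01 : s ∈ Icc (0:ℝ) 1 := ⟨hu.1.trans hs.1, hs.2.trans hw.2⟩
  have := nonempty_admissible (p := p) (c := c) hU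
  rw [Uc_eq_iInf p U c u, Uc_eq_iInf p U c w,
    Real.mul_iInf_of_nonneg (sub_nonneg.2 (hpm hs01 hw hs.2)),
    Real.mul_iInf_of_nonneg (sub_nonneg.2 (hpm hu hs01 hs.1))]
  exact le_ciInf_add_ciInf fun φ₁ φ₂ =>
    Uc_mul_le_chord_of_admissible hpm hp0 hu hw hp hs hUm hmu hmw φ₁.2 φ₂.2

/-- `U⁽ᶜ⁾` lies above its chords to `r₁` and `r₂`, and these tend to `U⁽ᶜ⁾ t`. -/
lemma Uc_eventually_gt (hpc : ContinuousOn p (Icc 0 1)) (hpm : StrictMonoOn p (Icc 0 1))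
    (hp0 : 0 ≤ p 0) (hU : ContinuousOn U (Icc 0 1)) {r₁ t r₂ m : ℝ} (hr₁ : 0 ≤ r₁)
    (ht : t ∈ Ioo r₁ r₂) (hr₂ : r₂ ≤ 1) (hm : m < Uc p U c t) :
    ∀ᶠ x in 𝓝 t, m < Uc p U c x := by
  have hr₁01 : r₁ ∈ Icc (0:ℝ) 1 := ⟨hr₁, (ht.1.trans ht.2).le.trans hr₂⟩
  have hr₂01 : r₂ ∈ Icc (0:ℝ) 1 := ⟨hr₁.trans (ht.1.trans ht.2).le, hr₂⟩
  have ht01 : t ∈ Icc (0:ℝ) 1 := ⟨hr₁.trans ht.1.le, ht.2.le.trans hr₂⟩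
  have hpt : ContinuousAt p t :=
    hpc.continuousAt (Icc_mem_nhds (hr₁.trans_lt ht.1) (ht.2.trans_le hr₂))
  have hp₁ : p r₁ < p t := hpm hr₁01 ht01 ht.1
  have hp₂ : p t < p r₂ := hpm ht01 hr₂01 ht.2
  have hsub : ∀ x ∈ Icc r₁ r₂, x ∈ Icc (0:ℝ) 1 := fun x hx => ⟨hr₁.trans hx.1, hx.2.trans hr₂⟩
  rw [← nhdsLE_sup_nhdsGE, eventually_sup]
  constructor
  · have hchord : ∀ᶠ x in 𝓝 t,
        (p t - p r₁) * m < (p t - p x) * Uc p U c r₁ + (p x - p r₁) * Uc p U c t :=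
      continuousAt_const.eventually_lt (by fun_prop) (by nlinarith)
    filter_upwards [nhdsWithin_le_nhds hchord, Ioc_mem_nhdsLE ht.1] with x hx hxI
    have := Uc_chord_le (c := c) hpm.monotoneOn hp0 hU hr₁01
      (hsub x ⟨hxI.1.le, hxI.2.trans ht.2.le⟩) ht01 hxI.1.le hxI.2
    nlinarith
  · have hchord : ∀ᶠ x in 𝓝 t,
        (p r₂ - p t) * m < (p r₂ - p x) * Uc p U c t + (p x - p t) * Uc p U c r₂ :=
      continuousAt_const.eventually_lt (by fun_prop) (by nlinarith)
    filter_upwards [nhdsWithin_le_nhds hchord, Ico_mem_nhdsGE ht.2] with x hx hxI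
    have := Uc_chord_le (c := c) hpm.monotoneOn hp0 hU ht01
      (hsub x ⟨ht.1.le.trans hxI.1, hxI.2.le⟩) hr₂01 hxI.1 hxI.2.le
    nlinarith

lemma exists_Uc_mul_le_chord_around (hpc : ContinuousOn p (Icc 0 1))
    (hpm : StrictMonoOn p (Icc 0 1)) (hp0 : 0 ≤ p 0) (hU : ContinuousOn U (Icc 0 1))
    {r₁ t r₂ : ℝ} (hr₁ : 0 ≤ r₁) (ht : t ∈ Ioo r₁ r₂) (hr₂ : r₂ ≤ 1)
    (hUt : U t < Uc p U c t) :
    ∃ u w, u ∈ Ioo r₁ t ∧ w ∈ Ioo t r₂ ∧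
      (p w - p u) * Uc p U c t ≤ (p w - p t) * Uc p U c u + (p t - p u) * Uc p U c w := by
  obtain ⟨m, hUm, hmUc⟩ := exists_between hUt
  have hnear : ∀ᶠ x in 𝓝 t, U x < m ∧ m < Uc p U c x ∧ x ∈ Ioo r₁ r₂ :=
    ((hU.continuousAt (Icc_mem_nhds (hr₁.trans_lt ht.1) (ht.2.trans_le hr₂))).eventually
      (gt_mem_nhds hUm)).and
    ((Uc_eventually_gt hpc hpm hp0 hU hr₁ ht hr₂ hmUc).and (Ioo_mem_nhds ht.1 ht.2))
  obtain ⟨l, r, ⟨hlt, htr⟩, hsub⟩ := mem_nhds_iff_exists_Ioo_subset.1 hnear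
  have hclose : ∀ x ∈ Icc ((l + t) / 2) ((t + r) / 2),
      U x < m ∧ m < Uc p U c x ∧ x ∈ Ioo r₁ r₂ :=
    fun x hx => hsub ⟨by linarith [hx.1], by linarith [hx.2]⟩
  obtain ⟨-, hmu, hu⟩ := hclose _ (left_mem_Icc.2 (by linarith))
  obtain ⟨-, hmw, hw⟩ := hclose _ (right_mem_Icc.2 (by linarith))
  have hu01 : (l + t) / 2 ∈ Icc (0:ℝ) 1 := ⟨hr₁.trans hu.1.le, hu.2.le.trans hr₂⟩
  have hw01 : (t + r) / 2 ∈ Icc (0:ℝ) 1 := ⟨hr₁.trans hw.1.le, hw.2.le.trans hr₂⟩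
  refine ⟨_, _, ⟨hu.1, by linarith⟩, ⟨by linarith, hw.2⟩, ?_⟩
  exact Uc_mul_le_chord hpm.monotoneOn hp0 hU hu01 hw01 (hpm hu01 hw01 (by linarith))
    ⟨by linarith, by linarith⟩ (fun x hx => (hclose x hx).1.le) hmu.le hmw.le

/-- At the leftmost maximiser `t` of `F = U⁽ᶜ⁾ - (a p + b)`, the chord inequality around `t` would
give `F t < max F`. -/
lemma Uc_le_of_le_endpoints (hpc : ContinuousOn p (Icc 0 1))
    (hpm : StrictMonoOn p (Icc 0 1)) (hp0 : 0 ≤ p 0) (hU : ContinuousOn U (Icc 0 1))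
    {r₁ r₂ a b : ℝ} (hr₁ : 0 ≤ r₁) (hr₂ : r₂ ≤ 1)
    (hgt : ∀ r ∈ Ioo r₁ r₂, U r < Uc p U c r)
    (h₁ : Uc p U c r₁ ≤ a * p r₁ + b) (h₂ : Uc p U c r₂ ≤ a * p r₂ + b) :
    ∀ r ∈ Icc r₁ r₂, Uc p U c r ≤ a * p r + b := by
  intro r hr
  set F := fun t => Uc p U c t - (a * p t + b)
  have hsub : Icc r₁ r₂ ⊆ Icc 0 1 := Icc_subset_Icc hr₁ hr₂
  have hline : ContinuousOn (fun t => -(a * p t + b)) (Icc r₁ r₂) := by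
    have := hpc.mono hsub
    fun_prop
  have hF : UpperSemicontinuousOn F (Icc r₁ r₂) := by
    simpa only [F, sub_eq_add_neg] using ((upperSemicontinuousOn_Uc hpc hpm.monotoneOn hp0).mono
      hsub).add hline.upperSemicontinuousOn
  obtain ⟨s, hs, hmax⟩ := hF.exists_isMaxOn ⟨r, hr⟩ isCompact_Icc
  suffices F s ≤ 0 from sub_nonpos.1 ((hmax hr).trans this)
  by_contra! hpos
  obtain ⟨t, ⟨ht, hFt⟩, hleast⟩ :=
    (hF.isCompact_inter_preimage_Ici isCompact_Icc (F s)).exists_isLeast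
      ⟨s, hs, mem_preimage.2 self_mem_Ici⟩
  have hFts : F t = F s := le_antisymm (hmax ht) hFt
  have ht' : t ∈ Ioo r₁ r₂ :=
    ⟨ht.1.lt_of_ne fun h => by simp only [F, ← h] at hFts; linarith,
      ht.2.lt_of_ne fun h => by simp only [F, h] at hFts; linarith⟩
  obtain ⟨u, w, hu, hw, hchord⟩ :=
    exists_Uc_mul_le_chord_around hpc hpm hp0 hU hr₁ ht' hr₂ (hgt t ht')
  have huI : u ∈ Icc r₁ r₂ := ⟨hu.1.le, hu.2.le.trans ht.2⟩
  have hwI : w ∈ Icc r₁ r₂ := ⟨ht.1.trans hw.1.le, hw.2.le⟩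
  have hFu : F u < F s := lt_of_not_ge fun h => (hleast ⟨huI, h⟩).not_gt hu.2
  have hFw : F w ≤ F s := hmax hwI
  have hpu : p u < p t := hpm (hsub huI) (hsub ht) hu.2
  have hpw : p t < p w := hpm (hsub ht) (hsub hwI) hw.1
  simp only [F] at hFts hFu hFw
  nlinarith

lemma le_Uc_of_le_endpoints (hpm : StrictMonoOn p (Icc 0 1)) (hp0 : 0 ≤ p 0)
    (hU : ContinuousOn U (Icc 0 1)) {r₁ r₂ a b : ℝ} (hr₁ : 0 ≤ r₁) (hr₁₂ : r₁ < r₂)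
    (hr₂ : r₂ ≤ 1) (h₁ : a * p r₁ + b ≤ Uc p U c r₁) (h₂ : a * p r₂ + b ≤ Uc p U c r₂) :
    ∀ r ∈ Icc r₁ r₂, a * p r + b ≤ Uc p U c r := by
  intro r hr
  have hsub : Icc r₁ r₂ ⊆ Icc 0 1 := Icc_subset_Icc hr₁ hr₂
  have hr₁I := hsub (left_mem_Icc.2 hr₁₂.le)
  have hr₂I := hsub (right_mem_Icc.2 hr₁₂.le)
  have := Uc_chord_le (c := c) hpm.monotoneOn hp0 hU hr₁I (hsub hr) hr₂I hr.1 hr.2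
  nlinarith [hpm hr₁I hr₂I hr₁₂, hpm.monotoneOn hr₁I (hsub hr) hr.1,
    hpm.monotoneOn (hsub hr) hr₂I hr.2]

end

theorem Uc_affine_on_noncontact_interval_general (p U : ℝ → ℝ)
    (hpc : ContinuousOn p (Set.Icc 0 1)) (hpm : StrictMonoOn p (Set.Icc 0 1))
    (hp0 : p 0 = 0)
    (hU : ContinuousOn U (Set.Icc 0 1))
    (c : ℝ)
    (r₁ r₂ : ℝ) (hr₁ : 0 ≤ r₁) (hr₁₂ : r₁ < r₂) (hr₂ : r₂ ≤ 1)
    (hgt : ∀ r ∈ Set.Ioo r₁ r₂, U r < Uc p U c r) :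
    ∃ a b : ℝ, ∀ r ∈ Set.Icc r₁ r₂, Uc p U c r = a * p r + b := by
  have hp : p r₁ ≠ p r₂ :=
    (hpm ⟨hr₁, hr₁₂.le.trans hr₂⟩ ⟨hr₁.trans hr₁₂.le, hr₂⟩ hr₁₂).ne
  set a := (Uc p U c r₂ - Uc p U c r₁) / (p r₂ - p r₁)
  set b := Uc p U c r₁ - a * p r₁
  have h₁ : a * p r₁ + b = Uc p U c r₁ := by ring
  have h₂ : a * p r₂ + b = Uc p U c r₂ := by
    have : a * (p r₂ - p r₁) = Uc p U c r₂ - Uc p U c r₁ :=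
      div_mul_cancel₀ _ (sub_ne_zero.2 hp.symm)
    linarith
  exact ⟨a, b, fun r hr => le_antisymm
    (Uc_le_of_le_endpoints hpc hpm hp0.ge hU hr₁ hr₂ hgt h₁.ge h₂.ge r hr)
    (le_Uc_of_le_endpoints hpm hp0.ge hU hr₁ hr₁₂ hr₂ h₁.le h₂.le r hr)⟩

/-- Wherever `U⁽ᶜ⁾ > U` on an open subinterval, `U⁽ᶜ⁾` is an affine transformation of
the scale function `p` on the closed subinterval. -/
theorem Uc_affine_on_noncontact_interval (p U : ℝ → ℝ)
    (hpc : ContinuousOn p (Set.Icc 0 1)) (hpm : StrictMonoOn p (Set.Icc 0 1))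
    (hp0 : p 0 = 0)
    (hU : ContinuousOn U (Set.Icc 0 1))
    (c : ℝ) (hc : U 0 ≤ c)
    (r₁ r₂ : ℝ) (hr₁ : 0 ≤ r₁) (hr₁₂ : r₁ < r₂) (hr₂ : r₂ ≤ 1)
    (hgt : ∀ r ∈ Set.Ioo r₁ r₂, U r < Uc p U c r) :
    ∃ a b : ℝ, ∀ r ∈ Set.Icc r₁ r₂, Uc p U c r = a * p r + b :=
  Uc_affine_on_noncontact_interval_general p U hpc hpm hp0 hU c r₁ r₂ hr₁ hr₁₂ hr₂ hgt
end
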